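/- Let κ, c ∈ ℂ with κ not zero or a negative integer, and suppose Re(κ) − (1/2)(e−1)|κ−1| ≥ |c|/4 + 1/2. Then the normalized generalized Struve function u_{κ,c} belongs to the class P_e. -/

import Mathlib

open Complex Metric Set

noncomputable def poch (x : ℂ) (n : ℕ) : ℂ := ∏ k ∈ Finset.range n, (x + k)

/-- The class `P_e`: `p` is analytic on the unit disk, `p 0 = 1`, and `p` maps the
unit disk into `exp(𝔻)` (equivalently, `p` is subordinate to `exp`). -/
def memPe (p : ℂ → ℂ) : Prop :=
  AnalyticOnNhd ℂ p (Metric.ball 0 1) ∧ p 0 = 1 ∧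
    ∀ z ∈ Metric.ball (0:ℂ) 1, p z ∈ Complex.exp '' Metric.ball 0 1

/-- The class `K_e` of exponential convex functions. -/
def memKe (f : ℂ → ℂ) : Prop :=
  AnalyticOnNhd ℂ f (Metric.ball 0 1) ∧ f 0 = 0 ∧ deriv f 0 = 1 ∧
    (∀ z ∈ Metric.ball (0:ℂ) 1, deriv f z ≠ 0) ∧
    memPe (fun z => 1 + z * deriv (deriv f) z / deriv f z)

/-- The class `S*_e` of exponential starlike functions. -/
def memSe (f : ℂ → ℂ) : Prop :=
  AnalyticOnNhd ℂ f (Metric.ball 0 1) ∧ f 0 = 0 ∧ deriv f 0 = 1 ∧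
    (∀ z ∈ Metric.ball (0:ℂ) 1, z ≠ 0 → f z ≠ 0) ∧
    memPe (fun z => if z = 0 then 1 else z * deriv f z / f z)

/-- The normalized generalized Struve function of the first kind
`u_{κ,c}(z) = ∑_{n≥0} ((−c/4)^n / ((3/2)_n (κ)_n)) z^n`. -/
noncomputable def struveU (κ c : ℂ) (z : ℂ) : ℂ :=
  ∑' n : ℕ, (-c / 4) ^ n / (poch (3/2) n * poch κ n) * z ^ n

/-!
Since `(3/2)_n` and `(κ)_n` have modulus at least `(3/2)^n` and `(Re κ)^n`, the `n`-th
coefficient of `u_{κ,c}` is at most `(|c| / (6 Re κ))^n`, and the hypothesis forces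
`|c| ≤ 2 Re κ`, so the coefficients are dominated by `3^{-n}`. Hence
`|u_{κ,c}(z) - 1| ≤ ∑_{n ≥ 1} 3^{-n} = 1/2` on the disk, and there
`|log u_{κ,c}(z)| ≤ (3/2) |u_{κ,c}(z) - 1| ≤ 3/4 < 1`.
-/

lemma mem_exp_image_ball_of_norm_sub_one_le {w : ℂ} (hw : ‖w - 1‖ ≤ 1 / 2) :
    w ∈ exp '' ball 0 1 := by
  have hw0 : w ≠ 0 := by
    rintro rfl
    norm_num at hw
  refine ⟨log w, ?_, exp_log hw0⟩
  have hlog := norm_log_one_add_half_le_self hw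
  rw [add_sub_cancel] at hlog
  rw [mem_ball_zero_iff]
  linarith

lemma memPe_of_norm_sub_one_le {p : ℂ → ℂ} (hp : AnalyticOnNhd ℂ p (ball 0 1))
    (h0 : p 0 = 1) (hp1 : ∀ z ∈ ball (0 : ℂ) 1, ‖p z - 1‖ ≤ 1 / 2) : memPe p :=
  ⟨hp, h0, fun z hz => mem_exp_image_ball_of_norm_sub_one_le (hp1 z hz)⟩

section PowerSeries

variable {a : ℕ → ℂ}

lemma analyticOnNhd_tsum_of_norm_le_one (ha : ∀ n, ‖a n‖ ≤ 1) :
    AnalyticOnNhd ℂ (fun z => ∑' n, a n * z ^ n) (ball 0 1) := by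
  have hradius : ((1 : NNReal) : ENNReal) ≤ (FormalMultilinearSeries.ofScalars ℂ a).radius :=
    FormalMultilinearSeries.le_radius_of_bound _ 1 fun n => by
      simpa [FormalMultilinearSeries.ofScalars_norm] using ha n
  have hsum : (fun z => ∑' n, a n * z ^ n) = (FormalMultilinearSeries.ofScalars ℂ a).sum :=
    (FormalMultilinearSeries.ofScalarsSum_eq_tsum a).symm
  rw [hsum, ← NNReal.coe_one, ← eball_coe]
  exact (FormalMultilinearSeries.ofScalars ℂ a).analyticOnNhd.mono (eball_subset_eball hradius)

lemma norm_tsum_sub_one_le_half (h0 : a 0 = 1) (ha : ∀ n, ‖a n‖ ≤ (1 / 3) ^ n) {z : ℂ}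
    (hz : ‖z‖ ≤ 1) : ‖∑' n, a n * z ^ n - 1‖ ≤ 1 / 2 := by
  have hterm : ∀ n, ‖a n * z ^ n‖ ≤ (1 / 3 : ℝ) ^ n := fun n => by
    rw [norm_mul, norm_pow]
    calc ‖a n‖ * ‖z‖ ^ n ≤ ‖a n‖ :=
          mul_le_of_le_one_right (norm_nonneg _) (pow_le_one₀ (norm_nonneg z) hz)
      _ ≤ _ := ha n
  have hgeom : Summable fun n : ℕ => (1 / 3 : ℝ) ^ (n + 1) :=
    (summable_nat_add_iff 1).mpr (summable_geometric_of_lt_one (by norm_num) (by norm_num))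
  have htail : Summable fun n => ‖a (n + 1) * z ^ (n + 1)‖ :=
    hgeom.of_nonneg_of_le (fun _ => norm_nonneg _) fun n => hterm (n + 1)
  have hsum : Summable fun n => a n * z ^ n :=
    (summable_nat_add_iff 1).mp htail.of_norm
  rw [hsum.tsum_eq_zero_add, h0, pow_zero, mul_one, add_sub_cancel_left]
  calc ‖∑' n, a (n + 1) * z ^ (n + 1)‖
      ≤ ∑' n, ‖a (n + 1) * z ^ (n + 1)‖ := norm_tsum_le_tsum_norm htail
    _ ≤ ∑' n : ℕ, (1 / 3 : ℝ) ^ (n + 1) := htail.tsum_le_tsum (fun n => hterm (n + 1)) hgeom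
    _ = 1 / 2 := by
      simp only [pow_succ', tsum_mul_left]
      rw [tsum_geometric_of_lt_one (by norm_num) (by norm_num)]
      norm_num

lemma memPe_tsum_of_norm_le_geometric (h0 : a 0 = 1)
    (ha : ∀ n, ‖a n‖ ≤ (1 / 3) ^ n) : memPe fun z => ∑' n, a n * z ^ n := by
  refine memPe_of_norm_sub_one_le ?_ ?_ fun z hz =>
    norm_tsum_sub_one_le_half h0 ha (mem_ball_zero_iff.mp hz).le
  · exact analyticOnNhd_tsum_of_norm_le_one fun n =>
      (ha n).trans (pow_le_one₀ (by norm_num) (by norm_num))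
  · rw [tsum_eq_single 0 fun n hn => by simp [zero_pow hn]]
    simp [h0]

end PowerSeries

lemma re_pow_le_norm_poch {x : ℂ} (hx : 0 ≤ x.re) (n : ℕ) : x.re ^ n ≤ ‖poch x n‖ := by
  rw [poch, norm_prod]
  calc x.re ^ n = ∏ _k ∈ Finset.range n, x.re := by simp
    _ ≤ ∏ k ∈ Finset.range n, ‖x + k‖ :=
      Finset.prod_le_prod (fun _ _ => hx) fun k _ => le_trans (by simp) (re_le_norm _)

noncomputable def struveCoeff (κ c : ℂ) (n : ℕ) : ℂ :=
  (-c / 4) ^ n / (poch (3 / 2) n * poch κ n)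

lemma norm_struveCoeff_le {κ : ℂ} (hκ : 0 < κ.re) (c : ℂ) (n : ℕ) :
    ‖struveCoeff κ c n‖ ≤ (‖c‖ / (6 * κ.re)) ^ n := by
  have h32 : (3 / 2 : ℝ) ^ n ≤ ‖poch (3 / 2) n‖ := by
    simpa using re_pow_le_norm_poch (x := 3 / 2) (by norm_num) n
  rw [struveCoeff, norm_div, norm_mul, norm_pow, norm_div, norm_neg, RCLike.norm_ofNat]
  calc (‖c‖ / 4) ^ n / (‖poch (3 / 2) n‖ * ‖poch κ n‖)
      ≤ (‖c‖ / 4) ^ n / ((3 / 2 : ℝ) ^ n * κ.re ^ n) := by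
        gcongr
        exact re_pow_le_norm_poch hκ.le n
    _ = (‖c‖ / (6 * κ.re)) ^ n := by
        rw [← mul_pow, ← div_pow]
        ring_nf

theorem struve_memPe_general (κ c : ℂ)
    (h : κ.re - (1 / 2) * (Real.exp 1 - 1) * ‖κ - 1‖ ≥
      ‖c‖ / 4 + 1 / 2) :
    memPe (struveU κ c) := by
  have he : 2 ≤ Real.exp 1 := by linarith [Real.add_one_le_exp 1]
  have hre : |κ.re - 1| ≤ ‖κ - 1‖ := by simpa using abs_re_le_norm (κ - 1)
  have hκ : 0 < κ.re := by nlinarith [norm_nonneg (κ - 1), norm_nonneg c]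
  have hc : ‖c‖ ≤ 2 * κ.re := by
    nlinarith [le_abs_self (κ.re - 1), norm_nonneg (κ - 1), norm_nonneg c]
  have hratio : ‖c‖ / (6 * κ.re) ≤ 1 / 3 := by
    rw [div_le_iff₀ (by positivity)]
    linarith
  refine memPe_tsum_of_norm_le_geometric (a := struveCoeff κ c) (by simp [struveCoeff, poch])
    fun n => (norm_struveCoeff_le hκ c n).trans ?_
  exact pow_le_pow_left₀ (by positivity) hratio n

/-- Sufficient condition for the normalized generalized Struve function `u_{κ,c}`
to belong to the class `P_e`. -/
theorem struve_memPe (κ c : ℂ) (hκ : ∀ n : ℕ, κ ≠ -(n : ℂ))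
    (h : κ.re - (1 / 2) * (Real.exp 1 - 1) * ‖κ - 1‖ ≥
      ‖c‖ / 4 + 1 / 2) :
    memPe (struveU κ c) :=
  struve_memPe_general κ c h
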